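/- Let K be a number field with [K : ℚ] = 2 and ring of integers O_K, let ℓ be a prime such that the ideal generated by ℓ in O_K is the square P² of a maximal ideal P (ℓ ramified), and let ρ : O_K →+* Matrix (Fin 2) (Fin 2) (ZMod ℓ) be a ring homomorphism such that ρ(α₀) is not a scalar matrix for some α₀ ∈ O_K. Then there is exactly one one-dimensional ZMod ℓ-subspace W of (Fin 2 → ZMod ℓ) that is invariant under ρ(α) for every α ∈ O_K; for every other one-dimensional subspace W' there exists α with ρ(α) mapping some vector of W' outside W'. -/

import Mathlib

open NumberField

set_option synthInstance.maxHeartbeats 1000000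
set_option maxHeartbeats 2000000

theorem one_invariant_line_of_ramified (K : Type*) [Field K] [NumberField K]
    (hdeg : Module.finrank ℚ K = 2) (ℓ : ℕ) [Fact ℓ.Prime]
    (P : Ideal (𝓞 K)) (hP : P.IsMaximal)
    (hram : Ideal.span {(ℓ : 𝓞 K)} = P ^ 2)
    (ρ : 𝓞 K →+* Matrix (Fin 2) (Fin 2) (ZMod ℓ))
    (α₀ : 𝓞 K) (hα₀ : ∀ c : ZMod ℓ, ρ α₀ ≠ c • (1 : Matrix (Fin 2) (Fin 2) (ZMod ℓ))) :
    {W : Submodule (ZMod ℓ) (Fin 2 → ZMod ℓ) |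
      Module.finrank (ZMod ℓ) W = 1 ∧ ∀ α : 𝓞 K, ∀ w ∈ W, (ρ α).mulVec w ∈ W}.ncard = 1 := by
  classical
  have hl : ℓ.Prime := Fact.out
  have hl0 : ((ℓ : ℕ) : 𝓞 K) ≠ 0 := by
    exact_mod_cast Nat.cast_ne_zero.mpr hl.ne_zero
  have hP0 : P ≠ ⊥ := by
    rintro rfl
    rw [show ((⊥ : Ideal (𝓞 K)) ^ 2) = ⊥ by rw [pow_two, Ideal.mul_bot],
      Ideal.span_singleton_eq_bot] at hram
    exact hl0 hram
  -- ρ kills span {ℓ}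
  have hker : ∀ q ∈ Ideal.span {((ℓ : ℕ) : 𝓞 K)}, ρ q = 0 := by
    intro q hq
    obtain ⟨c, rfl⟩ := Ideal.mem_span_singleton'.mp hq
    rw [map_mul, map_natCast, CharP.cast_eq_zero (Matrix (Fin 2) (Fin 2) (ZMod ℓ)) ℓ, mul_zero]
  -- absNorm P = ℓ
  have hnorm : Ideal.absNorm P = ℓ := by
    have h1 : Ideal.absNorm (Ideal.span {((ℓ : ℕ) : 𝓞 K)}) = ℓ ^ 2 := by
      rw [Ideal.absNorm_span_singleton]
      rw [show ((ℓ : ℕ) : 𝓞 K) = algebraMap ℤ (𝓞 K) (ℓ : ℤ) by push_cast; rfl]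
      have b := Module.Free.chooseBasis ℤ (𝓞 K)
      rw [Algebra.norm_algebraMap_of_basis b]
      rw [show Fintype.card (Module.Free.ChooseBasisIndex ℤ (𝓞 K)) = 2 by
        rw [← Module.finrank_eq_card_chooseBasisIndex]
        exact (RingOfIntegers.rank K).trans hdeg]
      simp [Int.natAbs_pow]
    rw [hram, map_pow] at h1
    exact Nat.pow_left_injective (by norm_num) h1
  -- residue field facts
  have hlP : ((ℓ : ℕ) : 𝓞 K) ∈ P := by
    have h2 : ((ℓ : ℕ) : 𝓞 K) ∈ P ^ 2 := by
      rw [← hram]; exact Ideal.mem_span_singleton_self _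
    exact Ideal.pow_le_self two_ne_zero h2
  haveI := hP.isPrime
  haveI : Nontrivial (𝓞 K ⧸ P) := Ideal.Quotient.nontrivial_iff.mpr hP.ne_top
  have hcardF : Nat.card (𝓞 K ⧸ P) = ℓ := by
    rw [← hnorm]; rfl
  haveI : Finite (𝓞 K ⧸ P) := Nat.finite_of_card_ne_zero (by rw [hcardF]; exact hl.ne_zero)
  haveI : Fintype (𝓞 K ⧸ P) := Fintype.ofFinite _
  have h0 : ((ℓ : ℕ) : 𝓞 K ⧸ P) = 0 := by
    rw [← map_natCast (Ideal.Quotient.mk P), Ideal.Quotient.eq_zero_iff_mem]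
    exact hlP
  haveI hcharF : CharP (𝓞 K ⧸ P) ℓ := (CharP.charP_iff_prime_eq_zero hl).mpr h0
  have hres : ∀ α : 𝓞 K, ∃ c : ℤ, α - (c : 𝓞 K) ∈ P := by
    intro α
    have hbij := ZMod.castHom_bijective (𝓞 K ⧸ P) ((Nat.card_eq_fintype_card).symm.trans hcardF)
    obtain ⟨y, hy⟩ := hbij.surjective (Ideal.Quotient.mk P α)
    obtain ⟨c, rfl⟩ := ZMod.intCast_surjective y
    refine ⟨c, ?_⟩
    rw [← Ideal.Quotient.eq_zero_iff_mem, map_sub, map_intCast, ← hy, map_intCast, sub_self]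
  -- pick a uniformizer π
  have hlt : P ^ 2 < P := by
    have := Ideal.pow_succ_lt_pow (P := P) hP0 1
    simpa using this
  obtain ⟨π, hπP, hπP2⟩ := SetLike.exists_of_lt hlt
  -- span {π} ⊔ P^2 = P
  have hJ : Ideal.span {π} ⊔ P ^ 2 = P := by
    have hle : Ideal.span {π} ⊔ P ^ 2 ≤ P :=
      sup_le ((Ideal.span_singleton_le_iff_mem P).mpr hπP) (Ideal.pow_le_self two_ne_zero)
    have hdvd : (Ideal.span {π} ⊔ P ^ 2) ∣ P ^ 2 := Ideal.dvd_iff_le.mpr le_sup_right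
    have hprime : Prime P := (Ideal.prime_iff_isPrime hP0).mpr hP.isPrime
    obtain ⟨i, hi2, hass⟩ := (dvd_prime_pow hprime 2).mp hdvd
    rw [associated_iff_eq] at hass
    interval_cases i
    · rw [pow_zero] at hass
      exact absurd (hass ▸ hle : (1 : Ideal (𝓞 K)) ≤ P) (by
        simpa [Ideal.one_eq_top, top_le_iff] using hP.ne_top)
    · rw [pow_one] at hass; exact hass
    · exfalso
      exact hπP2 (hass ▸ (le_sup_left : Ideal.span {π} ≤ _) (Ideal.mem_span_singleton_self π))
  set N := ρ π with hN
  -- elements of P map to multiples of N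
  have hPN : ∀ p ∈ P, ∃ d : ZMod ℓ, ρ p = d • N := by
    intro p hp
    rw [← hJ] at hp
    obtain ⟨y, hy, z, hz, rfl⟩ := Submodule.mem_sup.mp hp
    obtain ⟨β, rfl⟩ := Ideal.mem_span_singleton'.mp hy
    obtain ⟨c, hc⟩ := hres β
    refine ⟨((c : ℤ) : ZMod ℓ), ?_⟩
    have hz0 : ρ z = 0 := hker z (by rw [hram]; exact hz)
    have hβ : ρ β = ((c : ℤ) : Matrix (Fin 2) (Fin 2) (ZMod ℓ)) + ρ (β - (c : 𝓞 K)) := by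
      rw [← map_intCast ρ, ← map_add]; ring_nf
    have hrest : ρ (β - (c : 𝓞 K)) * N = 0 := by
      rw [← map_mul]
      apply hker
      rw [hram, pow_two]
      exact Ideal.mul_mem_mul hc hπP
    rw [map_add, hz0, add_zero, map_mul, hβ, add_mul, hrest, add_zero]
    rw [show ((c : ℤ) : Matrix (Fin 2) (Fin 2) (ZMod ℓ)) = ((c : ℤ) : ZMod ℓ) • 1 by
      rw [← Algebra.algebraMap_eq_smul_one, map_intCast], smul_mul_assoc, one_mul]
  -- the key decomposition
  have key : ∀ α : 𝓞 K, ∃ c d : ZMod ℓ, ρ α = c • 1 + d • N := by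
    intro α
    obtain ⟨c, hc⟩ := hres α
    obtain ⟨d, hd⟩ := hPN _ hc
    refine ⟨((c : ℤ) : ZMod ℓ), d, ?_⟩
    have : ρ α = ρ ((c : 𝓞 K)) + ρ (α - (c : 𝓞 K)) := by
      rw [← map_add]; ring_nf
    rw [this, hd, map_intCast,
      show ((c : ℤ) : Matrix (Fin 2) (Fin 2) (ZMod ℓ)) = ((c : ℤ) : ZMod ℓ) • 1 by
        rw [← Algebra.algebraMap_eq_smul_one, map_intCast]]
  have hN2 : N * N = 0 := by
    rw [hN, ← map_mul]
    apply hker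
    rw [hram, pow_two]
    exact Ideal.mul_mem_mul hπP hπP
  have hN0 : N ≠ 0 := by
    intro h
    obtain ⟨c, d, hcd⟩ := key α₀
    exact hα₀ c (by rw [hcd, h, smul_zero, add_zero])
  -- linear algebra: N ≠ 0, N² = 0 ⇒ unique invariant line = ker
  set f : (Fin 2 → ZMod ℓ) →ₗ[ZMod ℓ] (Fin 2 → ZMod ℓ) := Matrix.mulVecLin N with hf
  have hfapp : ∀ v, f v = N.mulVec v := fun v => rfl
  have hf0 : f ≠ 0 := by
    intro h
    apply hN0
    ext i j
    have h1 : f (Pi.single j 1) = 0 := by rw [h]; rfl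
    have h2 := congrFun h1 i
    rw [hfapp] at h2
    simpa [Matrix.mulVec_single] using h2
  have hfull : Module.finrank (ZMod ℓ) (Fin 2 → ZMod ℓ) = 2 := by simp
  have hle : LinearMap.range f ≤ LinearMap.ker f := by
    rintro x ⟨y, rfl⟩
    rw [LinearMap.mem_ker, hfapp, hfapp, Matrix.mulVec_mulVec, hN2, Matrix.zero_mulVec]
  have hrank : Module.finrank (ZMod ℓ) (LinearMap.ker f) = 1 := by
    have hrn := LinearMap.finrank_range_add_finrank_ker f
    rw [hfull] at hrn
    have h1 : Module.finrank (ZMod ℓ) (LinearMap.ker f) < 2 := by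
      have := Submodule.finrank_lt (K := ZMod ℓ) (V := Fin 2 → ZMod ℓ)
        (fun h => hf0 (LinearMap.ker_eq_top.mp h))
      rwa [hfull] at this
    have h2 := Submodule.finrank_mono hle
    omega
  have hsingle : {W : Submodule (ZMod ℓ) (Fin 2 → ZMod ℓ) |
      Module.finrank (ZMod ℓ) W = 1 ∧ ∀ α : 𝓞 K, ∀ w ∈ W, (ρ α).mulVec w ∈ W}
      = {LinearMap.ker f} := by
    ext W
    simp only [Set.mem_setOf_eq, Set.mem_singleton_iff]
    constructor
    · rintro ⟨hW1, hWinv⟩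
      have hWbot : W ≠ ⊥ := by
        intro h
        rw [h, finrank_bot] at hW1
        exact one_ne_zero hW1.symm
      obtain ⟨w, hwW, hw0⟩ := Submodule.exists_mem_ne_zero_of_ne_bot hWbot
      have hspan : Submodule.span (ZMod ℓ) {w} = W := by
        apply Submodule.eq_of_le_of_finrank_eq
        · rw [Submodule.span_le, Set.singleton_subset_iff]; exact hwW
        · rw [finrank_span_singleton hw0, hW1]
      have hNw : N.mulVec w ∈ Submodule.span (ZMod ℓ) {w} := by
        rw [hspan]; exact hWinv π w hwW
      obtain ⟨a, ha⟩ := Submodule.mem_span_singleton.mp hNw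
      have haa : (a * a) • w = 0 := by
        have h3 : N.mulVec (N.mulVec w) = 0 := by
          rw [Matrix.mulVec_mulVec, hN2, Matrix.zero_mulVec]
        rw [← ha, Matrix.mulVec_smul, ← ha, smul_smul] at h3
        exact h3
      have ha0 : a = 0 := by
        rcases smul_eq_zero.mp haa with h | h
        · exact mul_self_eq_zero.mp h
        · exact absurd h hw0
      have hwker : w ∈ LinearMap.ker f := by
        rw [LinearMap.mem_ker, hfapp, ← ha, ha0, zero_smul]
      rw [← hspan]
      apply Submodule.eq_of_le_of_finrank_eq
      · rw [Submodule.span_le, Set.singleton_subset_iff]; exact hwker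
      · rw [finrank_span_singleton hw0, hrank]
    · rintro rfl
      refine ⟨hrank, fun α w hw => ?_⟩
      obtain ⟨c, d, hcd⟩ := key α
      have hw0' : N.mulVec w = 0 := hw
      rw [LinearMap.mem_ker, hfapp] at hw ⊢
      rw [hcd, Matrix.add_mulVec, Matrix.smul_mulVec, Matrix.smul_mulVec,
        Matrix.one_mulVec, hw, smul_zero, add_zero, Matrix.mulVec_smul, hw, smul_zero]
  rw [hsingle, Set.ncard_singleton]
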